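/- arXiv:2407.18126 — 3 statements merged into one kernel-verified Lean document; each statement's English description precedes it below -/
import Mathlib

section
/- If G is an (m,F)-special graph with exactly q F-constituents, where F is a connected k-edge graph, and (G,F) is not special, then ι(G,F) = q = ⌊(m+1)/(k+2)⌋. -/
open SimpleGraph

variable {V : Type*} {W : Type*}

/-- The closed neighbourhood `N[D]` of a set `D` of vertices of `G`. -/
def closedNbhd (G : SimpleGraph V) (D : Set V) : Set V :=
  D ∪ {v | ∃ u ∈ D, G.Adj u v}

/-- `G` contains a subgraph isomorphic to `F` (an `F`-copy). -/
def HasCopy {W : Type*} (G : SimpleGraph V) (F : SimpleGraph W) : Prop :=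
  ∃ f : F →g G, Function.Injective f

/-- The graph `G − N[D]` obtained by deleting the closed neighbourhood of `D`. -/
def delNbhd (G : SimpleGraph V) (D : Set V) :
    SimpleGraph ((closedNbhd G D)ᶜ : Set V) :=
  G.induce ((closedNbhd G D)ᶜ)

/-- `D` is an `F`-isolating set of `G`: `G − N[D]` contains no `F`-copy. -/
def IsIsolating {W : Type*} (G : SimpleGraph V) (F : SimpleGraph W) (D : Set V) : Prop :=
  ¬ HasCopy (delNbhd G D) F

/-- The `F`-isolation number `ι(G,F)`. -/
noncomputable def iotaNum {W : Type*} (G : SimpleGraph V) (F : SimpleGraph W) : ℕ :=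
  sInf {n | ∃ D : Set V, IsIsolating G F D ∧ D.ncard = n}

/-- `D` is an `ℱ`-isolating set for a family `ℱ` of graphs. -/
def IsIsolatingFam {ι : Type*} {W : ι → Type*} (G : SimpleGraph V)
    (F : ∀ i, SimpleGraph (W i)) (D : Set V) : Prop :=
  ∀ i, ¬ HasCopy (delNbhd G D) (F i)

/-- The `ℱ`-isolation number for a family `ℱ` of graphs. -/
noncomputable def iotaFam {ι : Type*} {W : ι → Type*} (G : SimpleGraph V)
    (F : ∀ i, SimpleGraph (W i)) : ℕ :=
  sInf {n | ∃ D : Set V, IsIsolatingFam G F D ∧ D.ncard = n}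

/-- `γ(F) = 1`: `F` has a vertex adjacent to all the other vertices. -/
def DominatedByVertex {W : Type*} (F : SimpleGraph W) : Prop :=
  ∃ v : W, ∀ u : W, u = v ∨ F.Adj v u

/-- `(G,F)` is special: `G ≃ F`, or `F ≃ P₃` and `G ≃ C₆`. -/
def SpecialPair {W : Type*} (G : SimpleGraph V) (F : SimpleGraph W) : Prop :=
  Nonempty (G ≃g F) ∨
    (Nonempty (F ≃g pathGraph 3) ∧ Nonempty (G ≃g cycleGraph 6))

/-- `G` is an `(m,F)`-special graph: it consists of `q` pairwise disjoint
`F`-constituents (a copy of `F` on vertex set `FV i` joined by the single edge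
`vconn i – w i` to the `F`-connection `vconn i`), a tree on the `F`-connections,
and a connected remainder graph on `TV` (with `r` edges if `q ≥ 1`, and equal to
`G` itself, with `m` edges, if `q = 0`) meeting the constituents in exactly one
`F`-connection, where `m + 1 = q(k+2) + r`, `0 ≤ r ≤ k+1`, `k = |E(F)|`. -/
structure SpecialGraph {V W : Type*} [Fintype V] [Fintype W]
    (m : ℕ) (F : SimpleGraph W) (G : SimpleGraph V) where
  Fconn : F.Connected
  q : ℕ
  r : ℕ
  hdiv : m + 1 = q * (F.edgeSet.ncard + 2) + r
  hr : r ≤ F.edgeSet.ncard + 1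
  vconn : Fin q → V
  w : Fin q → V
  FV : Fin q → Set V
  TV : Set V
  w_mem : ∀ i, w i ∈ FV i
  vconn_not_mem : ∀ i j, vconn i ∉ FV j
  vconn_inj : Function.Injective vconn
  FV_disj : ∀ i j, i ≠ j → Disjoint (FV i) (FV j)
  Fiso : ∀ i, Nonempty ((G.induce (FV i)) ≃g F)
  vw_adj : ∀ i, G.Adj (vconn i) (w i)
  cover : Set.univ = TV ∪ ⋃ i, insert (vconn i) (FV i)
  TV_inter : 0 < q → ∃ i, TV ∩ (⋃ j, insert (vconn j) (FV j)) = {vconn i}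
  tree_conn : 0 < q → (G.induce (Set.range vconn)).Connected
  tree_card : (G.induce (Set.range vconn)).edgeSet.ncard = q - 1
  rem_conn : (G.induce TV).Preconnected
  rem_card : (G.induce TV).edgeSet.ncard = if q = 0 then m else r
  base : q = 0 → TV = Set.univ
  edge_classes : ∀ a b, G.Adj a b →
    (∃ i, a ∈ FV i ∧ b ∈ FV i) ∨
    (∃ i, (a = vconn i ∧ b = w i) ∨ (b = vconn i ∧ a = w i)) ∨
    (∃ i j, a = vconn i ∧ b = vconn j) ∨
    (a ∈ TV ∧ b ∈ TV)

private lemma walk_closure' {A : Type*} {H : SimpleGraph A} (R : Set A)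
    (hR : ∀ a ∈ R, ∀ b, H.Adj a b → b ∈ R) :
    ∀ {a b : A}, H.Walk a b → a ∈ R → b ∈ R := by
  intro a b p
  induction p with
  | nil => exact id
  | cons h p ih => intro ha; exact ih (hR _ ha _ h)

private lemma mem_range_of_sym2 {A B : Type*} (f : B → A) (s : Set (Sym2 B)) (a b : A)
    (h : s(a, b) ∈ Set.range (fun e : s => Sym2.map f e.1)) :
    a ∈ Set.range f ∧ b ∈ Set.range f := by
  obtain ⟨⟨e0, he0⟩, he⟩ := h
  induction e0 using Sym2.ind with
  | _ x y =>
    simp only [Sym2.map_pair_eq] at he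
    rw [Sym2.eq_iff] at he
    rcases he with ⟨h1, h2⟩ | ⟨h1, h2⟩
    · exact ⟨⟨x, h1⟩, ⟨y, h2⟩⟩
    · exact ⟨⟨y, h2⟩, ⟨x, h1⟩⟩

private lemma adj_of_mem_range' {A B : Type*} {F : SimpleGraph B} (f : B → A)
    (hf : Function.Injective f) (x y : B)
    (h : s(f x, f y) ∈ Set.range (fun e : F.edgeSet => Sym2.map f e.1)) : F.Adj x y := by
  obtain ⟨⟨e0, he0⟩, he⟩ := h
  induction e0 using Sym2.ind with
  | _ a b =>
    simp only [Sym2.map_pair_eq] at he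
    rw [Sym2.eq_iff] at he
    rcases he with ⟨h1, h2⟩ | ⟨h1, h2⟩
    · rw [← hf h1, ← hf h2]; exact he0
    · rw [← hf h1, ← hf h2]; exact he0.symm

private lemma ncard_range_eq' {A B : Type*} [Finite B] (f : B → A)
    (hf : Function.Injective f) : (Set.range f).ncard = Nat.card B := by
  rw [← Nat.card_coe_set_eq]
  exact Nat.card_congr (Equiv.ofInjective f hf).symm

private lemma edge_range_sub {A B : Type*} {F : SimpleGraph B} {H : SimpleGraph A}
    (f : F →g H) :
    Set.range (fun e : F.edgeSet => Sym2.map f e.1) ⊆ H.edgeSet := by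
  rintro e ⟨⟨e0, he0⟩, rfl⟩
  exact SimpleGraph.Hom.map_mem_edgeSet f he0

private lemma edge_range_ncard {A B : Type*} {F : SimpleGraph B} {H : SimpleGraph A}
    (f : F →g H) (hf : Function.Injective f) :
    (Set.range (fun e : F.edgeSet => Sym2.map f e.1)).ncard = F.edgeSet.ncard := by
  have hinj : Function.Injective (fun e : F.edgeSet => Sym2.map (f : B → A) e.1) := by
    intro e1 e2 h
    exact Subtype.ext (Sym2.map.injective hf h)
  rw [← Nat.card_coe_set_eq, ← Nat.card_coe_set_eq]
  exact Nat.card_congr (Equiv.ofInjective _ hinj).symm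

private lemma no_copy_core {A B : Type*} [Finite A] {F : SimpleGraph B} {H : SimpleGraph A}
    (hF : F.Connected) (f : F →g H) (hf : Function.Injective f)
    (hcard : H.edgeSet.ncard ≤ F.edgeSet.ncard + 1)
    (hH : H.Preconnected) (z : A) (hz : z ∉ Set.range f)
    (hz2 : ∀ a, H.Adj z a → a ∉ Set.range f) : False := by
  have hB : Finite B := Finite.of_injective f hf
  set E : Set (Sym2 A) := Set.range (fun e : F.edgeSet => Sym2.map f e.1) with hE
  have hEsub : E ⊆ H.edgeSet := edge_range_sub f
  have hfin : H.edgeSet.Finite := Set.toFinite _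
  have hEfin : E.Finite := hfin.subset hEsub
  have hEcard : E.ncard = F.edgeSet.ncard := edge_range_ncard f hf
  have hend : ∀ a b : A, s(a, b) ∈ E → a ∈ Set.range f ∧ b ∈ Set.range f :=
    fun a b h => mem_range_of_sym2 _ _ a b h
  have hdiff : (H.edgeSet \ E).ncard ≤ 1 := by
    rw [Set.ncard_diff hEsub hEfin, hEcard]
    omega
  have hzdiff : ∀ a, H.Adj z a → s(z, a) ∈ H.edgeSet \ E := fun a ha =>
    ⟨ha, fun hmem => hz (hend z a hmem).1⟩
  obtain ⟨x₀⟩ := hF.nonempty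
  by_cases hex : ∃ a, H.Adj z a
  · obtain ⟨u, hu⟩ := hex
    have huz : u ∉ Set.range f := hz2 u hu
    have hne : z ≠ u := hu.ne
    have honly : ∀ e ∈ H.edgeSet \ E, e = s(z, u) := fun e he =>
      (Set.ncard_le_one_iff (hfin.diff : (H.edgeSet \ E).Finite)).mp hdiff he (hzdiff u hu)
    have nbrz : ∀ a, H.Adj z a → a = u := by
      intro a ha
      have h := honly _ (hzdiff a ha)
      rw [Sym2.eq_iff] at h
      rcases h with ⟨_, h2⟩ | ⟨h1, h2⟩
      · exact h2
      · exact absurd h1 hne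
    have nbru : ∀ a, H.Adj u a → a = z := by
      intro a ha
      have hmem : s(u, a) ∈ H.edgeSet \ E :=
        ⟨ha, fun hmem => huz (hend u a hmem).1⟩
      have h := honly _ hmem
      rw [Sym2.eq_iff] at h
      rcases h with ⟨h1, _⟩ | ⟨_, h2⟩
      · exact absurd h1.symm hne
      · exact h2
    obtain ⟨p⟩ := hH z (f x₀)
    have hcl : ∀ a ∈ ({z, u} : Set A), ∀ b, H.Adj a b → b ∈ ({z, u} : Set A) := by
      rintro a (rfl | rfl) b hab
      · exact Or.inr (nbrz b hab)
      · exact Or.inl (nbru b hab)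
    rcases walk_closure' _ hcl p (Or.inl rfl) with h | h
    · exact hz ⟨x₀, h⟩
    · exact huz ⟨x₀, h⟩
  · push_neg at hex
    obtain ⟨p⟩ := hH z (f x₀)
    have hcl : ∀ a ∈ ({z} : Set A), ∀ b, H.Adj a b → b ∈ ({z} : Set A) := by
      rintro a rfl b hab
      exact absurd hab (hex b)
    exact hz ⟨x₀, walk_closure' _ hcl p rfl⟩

private lemma pigeon' {A : Type*} {q : ℕ} (C : Fin q → Set A) (D : Set A) (hD : D.Finite)
    (hdisj : ∀ i j, i ≠ j → Disjoint (C i) (C j))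
    (h : ∀ i, (D ∩ C i).Nonempty) : q ≤ D.ncard := by
  choose φ hφ using h
  have hinj : Function.Injective φ := by
    intro i j hij
    by_contra hne
    exact Set.disjoint_left.mp (hdisj i j hne) (hφ i).2 (hij ▸ (hφ j).2)
  have h1 : (Set.range φ).ncard = q := by
    rw [ncard_range_eq' φ hinj]; simp
  calc q = (Set.range φ).ncard := h1.symm
    _ ≤ D.ncard := Set.ncard_le_ncard (Set.range_subset_iff.mpr fun i => (hφ i).1) hD

private lemma card_contra' {A B : Type*} [Fintype A] [Fintype B] {s : Set A} {w0 : A}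
    (hw : w0 ∈ s) (hcard : s.ncard = Fintype.card B)
    (g : B → A) (hginj : Function.Injective g) (hrange : ∀ x, g x ∈ s \ {w0}) : False := by
  have h1 : Fintype.card B ≤ (s \ {w0}).ncard := by
    rw [← Nat.card_coe_set_eq, ← Nat.card_eq_fintype_card]
    exact Nat.card_le_card_of_injective
      (fun x => (⟨g x, hrange x⟩ : (s \ {w0} : Set A)))
      (fun a b hab => hginj (congrArg Subtype.val hab))
  have h2 : (s \ {w0}).ncard = s.ncard - 1 := Set.ncard_diff_singleton_of_mem hw
  have h3 : 0 < s.ncard := (Set.ncard_pos (Set.toFinite s)).mpr ⟨w0, hw⟩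
  omega

/-- If `G` is an `(m,F)`-special graph with exactly `q` `F`-constituents and
`(G,F)` is not special, then `ι(G,F) = q = ⌊(m+1)/(k+2)⌋`. -/
theorem iota_special_graph {V W : Type*} [Fintype V] [Fintype W]
    (m : ℕ) (F : SimpleGraph W) (G : SimpleGraph V)
    (S : SpecialGraph m F G) (hns : ¬ SpecialPair G F) :
    iotaNum G F = S.q ∧ S.q = (m + 1) / (F.edgeSet.ncard + 2) := by
  obtain ⟨Fconn, q, r, hdiv, hr, vconn, w, FV, TV, w_mem, vconn_not_mem, vconn_inj,
    FV_disj, Fiso, vw_adj, cover, TV_inter, tree_conn, tree_card, rem_conn, rem_card,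
    base, edge_classes⟩ := S
  set k := F.edgeSet.ncard with hk
  -- the division fact
  have hq2 : q = (m + 1) / (k + 2) := by
    symm
    rw [hdiv, mul_comm, Nat.mul_add_div (by omega), Nat.div_eq_of_lt (by omega)]
    omega
  -- membership : there is an isolating set of size q
  have hmem : ∃ D : Set V, IsIsolating G F D ∧ D.ncard = q := by
    by_cases hq0 : q = 0
    · subst hq0
      refine ⟨∅, ?_, by simp⟩
      rintro ⟨f, hfinj⟩
      have hfval : Function.Injective (fun x => (f x : V)) :=
        fun a b hab => hfinj (Subtype.ext hab)
      -- the copy f lands in G.induce univ ; transfer it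
      have hTVuniv : TV = Set.univ := base rfl
      set H := G.induce TV with hH
      let f' : F →g H :=
        { toFun := fun x => ⟨(f x : V), by rw [hTVuniv]; trivial⟩
          map_rel' := fun ha => f.map_adj ha }
      have hval : ∀ x, (f' x : V) = (f x : V) := fun _ => rfl
      have hf'inj : Function.Injective f' := by
        intro a b hab
        have h2 := congrArg Subtype.val hab
        rw [hval a, hval b] at h2
        exact hfinj (Subtype.ext h2)
      set E : Set (Sym2 TV) := Set.range (fun e : F.edgeSet => Sym2.map f' e.1) with hE
      have hEsub : E ⊆ H.edgeSet := edge_range_sub f'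
      have hEcard : E.ncard = k := edge_range_ncard f' hf'inj
      have hHm : H.edgeSet.ncard = m := by
        have := rem_card
        rw [if_pos rfl] at this
        exact this
      have hmk : m ≤ k := by omega
      have hEeq : E = H.edgeSet :=
        Set.eq_of_subset_of_ncard_le hEsub (by omega) (Set.toFinite _)
      by_cases hsurj : Function.Surjective f'
      · -- G ≃g F, contradiction with hns
        have e : F ≃g H :=
          { toEquiv := Equiv.ofBijective f' ⟨hf'inj, hsurj⟩
            map_rel_iff' := by
              intro x y
              constructor
              · intro hadj
                refine adj_of_mem_range' (f' : W → TV) hf'inj x y ?_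
                rw [← hE, hEeq]
                exact hadj
              · exact fun h => f'.map_adj h }
        have eGU : G ≃g G.induce TV := by
          rw [hTVuniv]; exact (SimpleGraph.induceUnivIso G).symm
        exact hns (Or.inl ⟨eGU.trans e.symm⟩)
      · obtain ⟨z, hz⟩ := not_forall.mp hsurj
        have hz' : z ∉ Set.range f' := fun ⟨x, hx⟩ => hz ⟨x, hx⟩
        refine no_copy_core Fconn f' hf'inj (by omega) ?_ z hz' ?_
        · exact rem_conn
        · intro a ha ⟨x, hx⟩
          have : s(z, a) ∈ H.edgeSet := ha
          rw [← hEeq] at this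
          exact hz' (mem_range_of_sym2 _ _ z a this).1
    · -- q > 0 : take D = range vconn
      have hqpos : 0 < q := Nat.pos_of_ne_zero hq0
      refine ⟨Set.range vconn, ?_, by rw [ncard_range_eq' vconn vconn_inj]; simp⟩
      rintro ⟨f, hfinj⟩
      have hfval : Function.Injective (fun x => (f x : V)) :=
        fun a b hab => hfinj (Subtype.ext hab)
      have hvN : ∀ i, vconn i ∈ closedNbhd G (Set.range vconn) := fun i => Or.inl ⟨i, rfl⟩
      have hadjN : ∀ i a, G.Adj (vconn i) a → a ∈ closedNbhd G (Set.range vconn) :=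
        fun i a h => Or.inr ⟨vconn i, ⟨i, rfl⟩, h⟩
      have hwN : ∀ i, w i ∈ closedNbhd G (Set.range vconn) := fun i => hadjN i _ (vw_adj i)
      have hfN : ∀ x, (f x : V) ∉ closedNbhd G (Set.range vconn) := fun x => (f x).2
      have hGadj : ∀ {x y}, F.Adj x y → G.Adj (f x : V) (f y : V) := fun h => f.map_adj h
      by_cases hcase : ∃ x i, (f x : V) ∈ FV i
      · -- case A : the copy lies inside a constituent
        obtain ⟨x₀, i, hx₀⟩ := hcase
        have hall : ∀ x, (f x : V) ∈ FV i := by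
          intro x
          obtain ⟨p⟩ := Fconn x₀ x
          refine walk_closure' {y | (f y : V) ∈ FV i} ?_ p hx₀
          intro a ha b hab
          have hGab : G.Adj (f a : V) (f b : V) := hGadj hab
          rcases edge_classes _ _ hGab with ⟨j, h1, h2⟩ | ⟨j, hj⟩ | ⟨j1, j2, h1, h2⟩ | ⟨h1, h2⟩
          · have hij : j = i := by
              by_contra hne
              exact Set.disjoint_left.mp (FV_disj j i hne) h1 ha
            exact hij ▸ h2
          · rcases hj with ⟨h1, h2⟩ | ⟨h1, h2⟩
            · exact absurd (h1 ▸ hvN j) (hfN a)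
            · exact absurd (h1 ▸ hvN j) (hfN b)
          · exact absurd (h1 ▸ hvN j1) (hfN a)
          · obtain ⟨i₀, hTVi⟩ := TV_inter hqpos
            have : (f a : V) ∈ TV ∩ ⋃ j, insert (vconn j) (FV j) :=
              ⟨h1, Set.mem_iUnion.mpr ⟨i, Or.inr ha⟩⟩
            rw [hTVi] at this
            exact absurd (this ▸ hvN i₀) (hfN a)
        -- cardinality contradiction
        obtain ⟨e⟩ := Fiso i
        have hcardFV : (FV i).ncard = Fintype.card W := by
          rw [← Nat.card_coe_set_eq, ← Nat.card_eq_fintype_card]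
          exact Nat.card_congr e.toEquiv
        refine card_contra' (w_mem i) hcardFV (fun x => (f x : V)) hfval ?_
        · intro x
          refine ⟨hall x, ?_⟩
          simp only [Set.mem_singleton_iff]
          intro h
          exact hfN x (h ▸ hwN i)
      · -- case B : the copy lies inside TV
        push_neg at hcase
        have hTVall : ∀ x, (f x : V) ∈ TV := by
          intro x
          have : (f x : V) ∈ Set.univ := trivial
          rw [cover] at this
          rcases this with h | h
          · exact h
          · obtain ⟨i, hi⟩ := Set.mem_iUnion.mp h
            rcases hi with h | h
            · exact absurd (h ▸ hvN i) (hfN x)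
            · exact absurd h (hcase x i)
        obtain ⟨i₀, hTVi⟩ := TV_inter hqpos
        have hv0TV : vconn i₀ ∈ TV := by
          have h : vconn i₀ ∈ TV ∩ ⋃ j, insert (vconn j) (FV j) := by
            rw [hTVi]; rfl
          exact h.1
        let f' : F →g G.induce TV :=
          { toFun := fun x => ⟨(f x : V), hTVall x⟩
            map_rel' := fun ha => f.map_adj ha }
        have hval : ∀ x, (f' x : V) = (f x : V) := fun _ => rfl
        have hf'inj : Function.Injective f' := by
          intro a b hab
          have h2 := congrArg Subtype.val hab
          rw [hval a, hval b] at h2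
          exact hfinj (Subtype.ext h2)
        have hcardTV : (G.induce TV).edgeSet.ncard ≤ k + 1 := by
          have := rem_card
          rw [if_neg hq0] at this
          omega
        refine no_copy_core Fconn f' hf'inj hcardTV rem_conn ⟨vconn i₀, hv0TV⟩ ?_ ?_
        · rintro ⟨x, hx⟩
          exact hfN x ((congrArg Subtype.val hx) ▸ hvN i₀)
        · rintro a ha ⟨x, hx⟩
          have hGa : G.Adj (vconn i₀) (a : V) := ha
          have : (a : V) ∈ closedNbhd G (Set.range vconn) := hadjN i₀ _ hGa
          exact hfN x ((congrArg Subtype.val hx) ▸ this)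
  -- lower bound
  have hlb : ∀ n ∈ {n | ∃ D : Set V, IsIsolating G F D ∧ D.ncard = n}, q ≤ n := by
    rintro n ⟨D, hiso, rfl⟩
    by_contra hlt
    push_neg at hlt
    have hqpos : 0 < q := lt_of_le_of_lt (Nat.zero_le _) hlt
    have hnotall : ¬ ∀ i, (D ∩ insert (vconn i) (FV i)).Nonempty := by
      intro h
      have := pigeon' (fun i => insert (vconn i) (FV i)) D (Set.toFinite D) ?_ h
      · omega
      · intro i j hne
        rw [Set.disjoint_iff_inter_eq_empty]
        ext v
        simp only [Set.mem_inter_iff, Set.mem_insert_iff, Set.mem_empty_iff_false, iff_false,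
          not_and]
        rintro (rfl | hv1) (h2 | h2)
        · exact hne (vconn_inj h2)
        · exact vconn_not_mem i j h2
        · exact vconn_not_mem j i (h2 ▸ hv1)
        · exact Set.disjoint_left.mp (FV_disj i j hne) hv1 h2
    push_neg at hnotall
    obtain ⟨i, hi⟩ := hnotall
    have hDC : ∀ v, v ∈ D → v ∈ insert (vconn i) (FV i) → False := by
      intro v h1 h2
      have : v ∈ D ∩ insert (vconn i) (FV i) := ⟨h1, h2⟩
      rw [hi] at this
      exact this
    obtain ⟨i₁, hTVi⟩ := TV_inter hqpos
    -- FV i is untouched by N[D]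
    have hdisjN : ∀ v ∈ FV i, v ∈ (closedNbhd G D)ᶜ := by
      intro v hv hvN
      rcases hvN with h | ⟨u, huD, hadj⟩
      · exact hDC v h (Or.inr hv)
      · rcases edge_classes _ _ hadj with ⟨j, h1, h2⟩ | ⟨j, hj⟩ | ⟨j1, j2, h1, h2⟩ | ⟨h1, h2⟩
        · have hij : j = i := by
            by_contra hne
            exact Set.disjoint_left.mp (FV_disj j i hne) h2 hv
          exact hDC u huD (Or.inr (hij ▸ h1))
        · rcases hj with ⟨h1, h2⟩ | ⟨h1, h2⟩
          · have hij : j = i := by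
              by_contra hne
              exact Set.disjoint_left.mp (FV_disj j i hne) (h2 ▸ w_mem j) hv
            exact hDC u huD (Or.inl (by rw [h1, hij]))
          · exact vconn_not_mem j i (h1 ▸ hv)
        · exact vconn_not_mem j2 i (h2 ▸ hv)
        · have : v ∈ TV ∩ ⋃ j, insert (vconn j) (FV j) :=
            ⟨h2, Set.mem_iUnion.mpr ⟨i, Or.inr hv⟩⟩
          rw [hTVi] at this
          exact vconn_not_mem i₁ i (this ▸ hv)
    obtain ⟨e⟩ := Fiso i
    let φ : F →g delNbhd G D :=
      { toFun := fun x => ⟨(e.symm x : V), hdisjN _ (e.symm x).2⟩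
        map_rel' := by
          intro x y hxy
          have : (G.induce (FV i)).Adj (e.symm x) (e.symm y) := by
            rw [e.symm.map_rel_iff]
            exact hxy
          exact this }
    have hvalφ : ∀ x, (φ x : V) = (e.symm x : V) := fun _ => rfl
    refine hiso ⟨φ, ?_⟩
    intro a b hab
    have h1 := congrArg Subtype.val hab
    rw [hvalφ a, hvalφ b] at h1
    exact e.symm.injective (Subtype.ext h1)
  constructor
  · exact le_antisymm (Nat.sInf_le hmem) (le_csInf ⟨q, hmem⟩ hlb)
  · exact hq2
end

section
/- If G is an (m,F)-special graph with q ≥ 1 F-constituents G_1, …, G_q with F-connections v_1, …, v_q, and D is any F-isolating set of G, then D ∩ V(G_i) ≠ ∅ for each i ∈ {1,…,q}; consequently ι(G,F) ≥ q. -/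
open SimpleGraph

variable {V : Type*} {W : Type*}

lemma aux_meets {V W : Type*} [Fintype V] [Fintype W]
    (m : ℕ) (F : SimpleGraph W) (G : SimpleGraph V)
    (S : SpecialGraph m F G) (hq : 0 < S.q)
    (D : Set V) (hD : IsIsolating G F D) (i : Fin S.q) :
    (D ∩ insert (S.vconn i) (S.FV i)).Nonempty := by
  by_contra hne
  rw [Set.not_nonempty_iff_eq_empty] at hne
  have hnotin : ∀ x ∈ D, x ≠ S.vconn i ∧ x ∉ S.FV i := by
    intro x hx
    have h := Set.eq_empty_iff_forall_notMem.1 hne x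
    constructor
    · rintro rfl; exact h ⟨hx, Set.mem_insert _ _⟩
    · intro hxF; exact h ⟨hx, Set.mem_insert_of_mem _ hxF⟩
  -- TV ∩ FV i = ∅
  have hTV : ∀ x ∈ S.TV, x ∉ S.FV i := by
    obtain ⟨i0, hi0⟩ := S.TV_inter hq
    intro x hxT hxF
    have : x ∈ S.TV ∩ ⋃ j, insert (S.vconn j) (S.FV j) :=
      ⟨hxT, Set.mem_iUnion.2 ⟨i, Set.mem_insert_of_mem _ hxF⟩⟩
    rw [hi0] at this
    rw [this] at hxF
    exact S.vconn_not_mem i0 i hxF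
  -- FV i avoids the closed neighbourhood
  have hcl : ∀ x ∈ S.FV i, x ∈ (closedNbhd G D)ᶜ := by
    intro x hx
    intro hmem
    rcases hmem with hmem | ⟨u, hu, hadj⟩
    · exact (hnotin x hmem).2 hx
    · rcases S.edge_classes u x hadj with ⟨j, huj, hxj⟩ | ⟨j, hj⟩ | ⟨j, j', hj, hj'⟩ | ⟨hT, hT'⟩
      · have hij : j = i := by
          by_contra hne'
          exact (S.FV_disj j i hne').le_bot ⟨hxj, hx⟩ |>.elim
        exact (hnotin u hu).2 (hij ▸ huj)
      · rcases hj with ⟨hu1, hx1⟩ | ⟨hx1, hu1⟩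
        · have hji : j = i := by
            by_contra hne'
            rw [hx1] at hx
            exact (S.FV_disj j i hne').le_bot ⟨S.w_mem j, hx⟩ |>.elim
          exact (hnotin u hu).1 (hu1.trans (by rw [hji]))
        · rw [hx1] at hx; exact S.vconn_not_mem j i hx
      · rw [hj'] at hx; exact S.vconn_not_mem j' i hx
      · exact hTV x hT' hx
  -- build an F-copy in delNbhd G D
  apply hD
  obtain ⟨e⟩ := S.Fiso i
  let e' := e.symm
  refine ⟨⟨fun w => ⟨((e' w : S.FV i) : V), hcl _ (e' w).2⟩, ?_⟩, ?_⟩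
  · intro a b hab
    have h2 : (G.induce (S.FV i)).Adj (e' a) (e' b) := e'.map_rel_iff.2 hab
    simpa [delNbhd] using h2
  · intro a b hab
    have h2 := congrArg Subtype.val hab
    exact e'.injective (Subtype.ext h2)

/-- If `G` is an `(m,F)`-special graph with `q ≥ 1` `F`-constituents
`G₁, …, G_q` (where `V(Gᵢ) = {vᵢ} ∪ V(Fᵢ)`), then every `F`-isolating set of
`G` meets every `V(Gᵢ)`; consequently `ι(G,F) ≥ q`. -/
theorem isolating_meets_constituents {V W : Type*} [Fintype V] [Fintype W]
    (m : ℕ) (F : SimpleGraph W) (G : SimpleGraph V)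
    (S : SpecialGraph m F G) (hq : 0 < S.q)
    (D : Set V) (hD : IsIsolating G F D) :
    (∀ i : Fin S.q, (D ∩ insert (S.vconn i) (S.FV i)).Nonempty) ∧
      S.q ≤ iotaNum G F := by
  refine ⟨fun i => aux_meets m F G S hq D hD i, ?_⟩
  -- W is nonempty, otherwise hD is contradictory
  have hW : Nonempty W := by
    by_contra h
    exact hD ⟨⟨fun w => ((h ⟨w⟩).elim), fun {a b} _ => ((h ⟨a⟩).elim)⟩,
      fun a => ((h ⟨a⟩).elim)⟩
  -- every isolating set has at least q elements
  have hcard : ∀ D' : Set V, IsIsolating G F D' → S.q ≤ D'.ncard := by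
    intro D' hD'
    have hmeet := fun i => aux_meets m F G S hq D' hD' i
    choose f hf1 hf2 using fun i => hmeet i
    have hinj : Function.Injective f := by
      intro a b hab
      by_contra hne
      have hdisj : Disjoint (insert (S.vconn a) (S.FV a)) (insert (S.vconn b) (S.FV b)) := by
        rw [Set.disjoint_iff]
        rintro x ⟨hxa, hxb⟩
        rcases hxa with rfl | hxa
        · rcases hxb with hxb | hxb
          · exact hne (S.vconn_inj hxb)
          · exact S.vconn_not_mem a b hxb
        · rcases hxb with rfl | hxb
          · exact S.vconn_not_mem b a hxa
          · exact (S.FV_disj a b hne).le_bot ⟨hxa, hxb⟩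
      exact hdisj.le_bot ⟨hf2 a, hab ▸ hf2 b⟩
    have hrange : Set.range f ⊆ D' := by
      rintro _ ⟨i, rfl⟩; exact hf1 i
    calc S.q = (Set.range f).ncard := by
            rw [← Nat.card_coe_set_eq, Nat.card_range_of_injective hinj,
              Nat.card_eq_fintype_card, Fintype.card_fin]
      _ ≤ D'.ncard := Set.ncard_le_ncard hrange (Set.toFinite D')
  -- the defining set of iotaNum is nonempty
  have hne : {n | ∃ D : Set V, IsIsolating G F D ∧ D.ncard = n}.Nonempty := by
    refine ⟨(Set.univ : Set V).ncard, Set.univ, ?_, rfl⟩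
    rintro ⟨f, -⟩
    have := (f hW.some).2
    apply this
    exact Or.inl (Set.mem_univ _)
  apply le_csInf hne
  rintro n ⟨D', hD', rfl⟩
  exact hcard D' hD'
end

section
/- For every m ≥ 0 and every k-edge graph F with γ(F)=1, except when 1 ≤ m = k ≤ 2, there exists a connected m-edge graph G with (G,F) not special such that ι(G,F) = ⌊(m+1)/(k+2)⌋; that is, the bound ⌊(m+1)/(k+2)⌋ on the F-isolation number is attained. -/
open SimpleGraph

variable {V : Type*} {W : Type*}

set_option linter.unusedVariables false
set_option linter.unnecessarySeqFocus false

section AuxLemmas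

-- aux lemmas
lemma hasCopy_of_delNbhd {G : SimpleGraph V} {F : SimpleGraph W} {D : Set V}
    (h : HasCopy (delNbhd G D) F) : HasCopy G F := by
  obtain ⟨f, hf⟩ := h
  exact ⟨SimpleGraph.Hom.comp ⟨Subtype.val, fun h => h⟩ f, Subtype.val_injective.comp hf⟩

lemma iota_zero {G : SimpleGraph V} {F : SimpleGraph W} (h : ¬ HasCopy G F) :
    iotaNum G F = 0 := by
  have h0 : 0 ∈ {n | ∃ D : Set V, IsIsolating G F D ∧ D.ncard = 0} :=
    ⟨∅, fun hc => h (hasCopy_of_delNbhd hc), Set.ncard_empty _⟩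
  exact Nat.sInf_eq_zero.mpr (Or.inl h0)

lemma ncard_le_of_hasCopy [Finite V] [Finite W] {G : SimpleGraph V} {F : SimpleGraph W}
    (h : HasCopy G F) : F.edgeSet.ncard ≤ G.edgeSet.ncard := by
  obtain ⟨f, hf⟩ := h
  have := Nat.card_le_card_of_injective _ (SimpleGraph.Hom.mapEdgeSet.injective f hf)
  simpa [Nat.card_coe_set_eq] using this

lemma iso_edge_ncard {G : SimpleGraph V} {F : SimpleGraph W} (e : G ≃g F) :
    G.edgeSet.ncard = F.edgeSet.ncard := by
  have := Nat.card_congr e.mapEdgeSet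
  simpa [Nat.card_coe_set_eq] using this

lemma hasCopy_of_iso {G : SimpleGraph V} {F : SimpleGraph W} (e : G ≃g F) :
    HasCopy G F := ⟨e.symm.toHom, e.symm.injective⟩

lemma ncard_range_inj {α β : Type*} {f : α → β} (hf : Function.Injective f) :
    (Set.range f).ncard = Nat.card α := by
  rw [← Nat.card_coe_set_eq, Nat.card_range_of_injective hf]

-- path graph edge count
lemma pathGraph_edgeSet (t : ℕ) :
    (pathGraph (t+1)).edgeSet =
      Set.range (fun i : Fin t => s(i.castSucc, i.succ)) := by
  ext e
  induction e using Sym2.ind with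
  | _ x y =>
    simp only [SimpleGraph.mem_edgeSet, pathGraph_adj, Set.mem_range]
    constructor
    · rintro (h | h)
      · exact ⟨⟨x.val, by omega⟩, by
          rw [Sym2.eq_iff]; left
          constructor <;> apply Fin.ext <;> simp [Fin.castSucc, Fin.succ] <;> omega⟩
      · exact ⟨⟨y.val, by omega⟩, by
          rw [Sym2.eq_iff]; right
          constructor <;> apply Fin.ext <;> simp [Fin.castSucc, Fin.succ] <;> omega⟩
    · rintro ⟨i, hi⟩
      rw [Sym2.eq_iff] at hi
      rcases hi with ⟨h1, h2⟩ | ⟨h1, h2⟩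
      · left; rw [← h1, ← h2]; simp
      · right; rw [← h1, ← h2]; simp

lemma pathGraph_edge_ncard (t : ℕ) : (pathGraph (t+1)).edgeSet.ncard = t := by
  rw [pathGraph_edgeSet]
  have hinj : Function.Injective (fun i : Fin t => s(i.castSucc, i.succ)) := by
    intro i j hij
    rw [Sym2.eq_iff] at hij
    rcases hij with ⟨h1, _⟩ | ⟨h1, h2⟩
    · exact Fin.ext (by simpa [Fin.ext_iff] using h1)
    · have e1 : (i.castSucc : ℕ) = j.succ := by rw [h1]
      have e2 : (i.succ : ℕ) = j.castSucc := by rw [h2]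
      simp at e1 e2
      apply Fin.ext; omega
  rw [ncard_range_inj hinj]
  simp

lemma pathGraph3_edge_ncard : (pathGraph 3).edgeSet.ncard = 2 :=
  pathGraph_edge_ncard 2

lemma cycleGraph6_edge_ncard : (cycleGraph 6).edgeSet.ncard = 6 := by
  have : (cycleGraph 6).edgeFinset.card = 6 := by decide
  rw [← Set.ncard_coe_finset, coe_edgeFinset] at this
  exact this

def starG (t : ℕ) : SimpleGraph (Option (Fin t)) where
  Adj a b := a ≠ b ∧ (a = none ∨ b = none)
  symm := ⟨fun a b ⟨h1, h2⟩ => ⟨h1.symm, h2.symm⟩⟩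
  loopless := ⟨fun a h => h.1 rfl⟩

lemma starG_adj {t : ℕ} {a b : Option (Fin t)} :
    (starG t).Adj a b ↔ a ≠ b ∧ (a = none ∨ b = none) := Iff.rfl

lemma starG_edgeSet (t : ℕ) :
    (starG t).edgeSet = Set.range (fun i : Fin t => s((none : Option (Fin t)), some i)) := by
  ext e
  induction e using Sym2.ind with
  | _ x y =>
    simp only [SimpleGraph.mem_edgeSet, starG_adj, Set.mem_range]
    constructor
    · rintro ⟨hne, h | h⟩
      · subst h
        match y, hne with
        | some j, _ => exact ⟨j, rfl⟩
      · subst h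
        match x, hne with
        | some j, _ => exact ⟨j, Sym2.eq_swap⟩
    · rintro ⟨i, hi⟩
      rw [Sym2.eq_iff] at hi
      rcases hi with ⟨h1, h2⟩ | ⟨h1, h2⟩
      · subst h1; subst h2; exact ⟨by simp, Or.inl rfl⟩
      · subst h1; subst h2; exact ⟨by simp, Or.inr rfl⟩

lemma starG_edge_ncard (t : ℕ) : (starG t).edgeSet.ncard = t := by
  rw [starG_edgeSet, ncard_range_inj]
  · simp
  · intro i j hij
    rw [Sym2.eq_iff] at hij
    rcases hij with ⟨_, h2⟩ | ⟨h1, _⟩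
    · simpa using h2
    · simp at h1

lemma starG_preconnected (t : ℕ) : (starG t).Preconnected := by
  have key : ∀ x : Option (Fin t), (starG t).Reachable x none := by
    intro x
    match x with
    | none => exact Reachable.refl _
    | some i => exact SimpleGraph.Adj.reachable ⟨by simp, Or.inr rfl⟩
  intro x y
  exact (key x).trans (key y).symm

-- Δ-argument: F has a vertex of degree ≥ card W - 1 ≥ 3, G has max degree ≤ 2
lemma no_copy_of_max_deg [Finite V] [Fintype W] {G : SimpleGraph V} {F : SimpleGraph W}
    (v₀ : W) (hv₀ : ∀ u : W, u = v₀ ∨ F.Adj v₀ u) (hn : 4 ≤ Fintype.card W)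
    (hdeg : ∀ x : V, (G.neighborSet x).ncard ≤ 2) : ¬ HasCopy G F := by
  rintro ⟨f, hf⟩
  have hsub : ({u : W | u ≠ v₀} : Set W).ncard ≤ (G.neighborSet (f v₀)).ncard := by
    apply Set.ncard_le_ncard_of_injOn f ?_ (hf.injOn) (Set.toFinite _)
    intro u hu
    rcases hv₀ u with h | h
    · exact absurd h hu
    · exact f.map_adj h
  have hc : ({u : W | u ≠ v₀} : Set W).ncard = Fintype.card W - 1 := by
    have h1 : ({u : W | u ≠ v₀} : Set W) = {v₀}ᶜ := by ext z; simp
    have h2 := Set.ncard_add_ncard_compl ({v₀} : Set W)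
    rw [h1]
    rw [Set.ncard_singleton] at h2
    rw [Nat.card_eq_fintype_card] at h2
    omega
  have := hdeg (f v₀)
  omega

-- neighbor bound for path graph
lemma path_neighbor_bound (t : ℕ) (x : Fin (t+1)) :
    ((pathGraph (t+1)).neighborSet x).ncard ≤ 2 := by
  have hsub : (pathGraph (t+1)).neighborSet x ⊆
      {(⟨x.val - 1, by omega⟩ : Fin (t+1)), ⟨min (x.val + 1) t, by omega⟩} := by
    intro y hy
    rw [SimpleGraph.mem_neighborSet, pathGraph_adj] at hy
    rcases hy with h | h
    · right
      apply Fin.ext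
      simp only
      have := y.isLt
      omega
    · left
      apply Fin.ext
      simp only
      omega
  calc ((pathGraph (t+1)).neighborSet x).ncard ≤ _ := Set.ncard_le_ncard hsub (Set.toFinite _)
    _ ≤ 2 := by
        apply le_trans (Set.ncard_insert_le _ _)
        simp

lemma no_copy_star_K3 [Fintype W] {F : SimpleGraph W} (v₀ : W)
    (hv₀ : ∀ u : W, u = v₀ ∨ F.Adj v₀ u) (hn : Fintype.card W = 3)
    (hk : F.edgeSet.ncard = 3) : ¬ HasCopy (starG 3) F := by
  have hnt : Nontrivial W := Fintype.one_lt_card_iff_nontrivial.mp (by omega)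
  obtain ⟨u, hu⟩ := exists_ne v₀
  have hw : ∃ w : W, w ≠ v₀ ∧ w ≠ u := by
    by_contra hcon
    push_neg at hcon
    have huniv : (Set.univ : Set W) = {v₀, u} := by
      ext z
      simp only [Set.mem_univ, Set.mem_insert_iff, Set.mem_singleton_iff, true_iff]
      by_contra hz
      push_neg at hz
      exact hz.2 (hcon z hz.1)
    have := Set.ncard_univ W
    rw [huniv, Set.ncard_pair (Ne.symm hu), Nat.card_eq_fintype_card] at this
    omega
  obtain ⟨w, hwv, hwu⟩ := hw
  have huniv : ∀ z : W, z = v₀ ∨ z = u ∨ z = w := by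
    intro z
    by_contra hz
    push_neg at hz
    obtain ⟨hz1, hz2, hz3⟩ := hz
    have h3 : ({v₀, u, w} : Set W).ncard = 3 := by
      rw [Set.ncard_insert_of_notMem (by simp [Ne.symm hu, Ne.symm hwv]) (Set.toFinite _),
        Set.ncard_pair hwu.symm]
    have h4 : (insert z {v₀, u, w} : Set W).ncard = 4 := by
      rw [Set.ncard_insert_of_notMem (by simp [hz1, hz2, hz3]) (Set.toFinite _), h3]
    have hle := Set.ncard_le_ncard (Set.subset_univ (insert z {v₀, u, w} : Set W)) (Set.toFinite _)
    rw [Set.ncard_univ, Nat.card_eq_fintype_card, hn, h4] at hle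
    omega
  have hadj_vu : F.Adj v₀ u := (hv₀ u).resolve_left hu
  have hadj_vw : F.Adj v₀ w := (hv₀ w).resolve_left hwv
  have hadj_uw : F.Adj u w := by
    by_contra hcon
    have hss : F.edgeSet ⊆ {s(v₀, u), s(v₀, w)} := by
      intro e
      induction e using Sym2.ind with
      | _ a b =>
        intro he
        rw [SimpleGraph.mem_edgeSet] at he
        rcases huniv a with rfl | rfl | rfl <;> rcases huniv b with rfl | rfl | rfl
        · exact absurd rfl he.ne
        · left; rfl
        · right; rfl
        · left; exact Sym2.eq_swap
        · exact absurd rfl he.ne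
        · exact absurd he hcon
        · right; exact Sym2.eq_swap
        · exact absurd he.symm hcon
        · exact absurd rfl he.ne
    have hle := Set.ncard_le_ncard hss (Set.toFinite _)
    have h2 : ({s(v₀, u), s(v₀, w)} : Set (Sym2 W)).ncard ≤ 2 :=
      le_trans (Set.ncard_insert_le _ _) (by simp)
    omega
  rintro ⟨f, hf⟩
  have key : ∀ a b : W, F.Adj a b → f a = none ∨ f b = none := by
    intro a b hab
    exact (f.map_adj hab).2
  match hfu : f u, hfw : f w with
  | none, _ =>
    have h1 : f v₀ ≠ none := fun h => hu (hf (h.trans hfu.symm)).symm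
    have h2 : f w ≠ none := fun h => hwu (hf (h.trans hfu.symm))
    rcases key v₀ w hadj_vw with h | h
    · exact h1 h
    · exact h2 h
  | some _, none =>
    have h1 : f v₀ ≠ none := fun h => hwv (hf (hfw.trans h.symm))
    have h2 : f u ≠ none := by rw [hfu]; simp
    rcases key v₀ u hadj_vu with h | h
    · exact h1 h
    · exact h2 h
  | some _, some _ =>
    rcases key u w hadj_uw with h | h
    · rw [hfu] at h; simp at h
    · rw [hfw] at h; simp at h


lemma edge_ncard_le_choose {W : Type*} [Fintype W] (F : SimpleGraph W) :
    F.edgeSet.ncard ≤ (Fintype.card W).choose 2 := by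
  classical
  have h := SimpleGraph.card_edgeFinset_le_card_choose_two (G := F)
  rwa [← coe_edgeFinset, Set.ncard_coe_finset]

lemma hasCopy_congr {W' : Type*} {G : SimpleGraph V} {F : SimpleGraph W} {F' : SimpleGraph W'}
    (φ : F' ≃g F) : HasCopy G F ↔ HasCopy G F' := by
  constructor
  · rintro ⟨f, hf⟩
    refine ⟨f.comp φ.toHom, ?_⟩
    intro a b hab
    exact φ.injective (hf hab)
  · rintro ⟨f, hf⟩
    refine ⟨f.comp φ.symm.toHom, ?_⟩
    intro a b hab
    exact φ.symm.injective (hf hab)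

lemma iotaNum_congr {W' : Type*} {F : SimpleGraph W} {F' : SimpleGraph W'}
    (φ : F' ≃g F) (G : SimpleGraph V) : iotaNum G F = iotaNum G F' := by
  unfold iotaNum
  congr 1
  ext nn
  simp only [Set.mem_setOf_eq]
  refine exists_congr fun D => and_congr_left fun _ => ?_
  unfold IsIsolating
  rw [hasCopy_congr φ]

lemma specialPair_of {W' : Type*} {G : SimpleGraph V} {F : SimpleGraph W} {F' : SimpleGraph W'}
    (φ : F' ≃g F) (h : SpecialPair G F) : SpecialPair G F' := by
  unfold SpecialPair at h ⊢
  rcases h with hi | ⟨ha, h2⟩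
  · obtain ⟨i⟩ := hi
    exact Or.inl ⟨i.trans φ.symm⟩
  · obtain ⟨a⟩ := ha
    exact Or.inr ⟨⟨φ.trans a⟩, h2⟩

end AuxLemmas

open Sum

section Cons
variable (F : SimpleGraph W) (v₀ : W) (q r : ℕ)

abbrev CV (W : Type*) (q r : ℕ) : Type _ := Fin q ⊕ ((Fin q × W) ⊕ Fin r)

def consAdj : CV W q r → CV W q r → Prop
  | inl i, inl j => i.val + 1 = j.val ∨ j.val + 1 = i.val
  | inl i, inr (inl (j, w)) => i = j ∧ w = v₀
  | inr (inl (j, w)), inl i => i = j ∧ w = v₀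
  | inl i, inr (inr _) => i.val = 0
  | inr (inr _), inl i => i.val = 0
  | inr (inl (i, w)), inr (inl (i', w')) => i = i' ∧ F.Adj w w'
  | _, _ => False

def consG : SimpleGraph (CV W q r) where
  Adj := consAdj F v₀ q r
  symm := by
    constructor
    rintro (i | ⟨i, w⟩ | j) (i' | ⟨i', w'⟩ | j') h <;>
      simp only [consAdj] at h ⊢
    · omega
    · exact h
    · exact h
    · exact h
    · exact ⟨h.1.symm, h.2.symm⟩
    · exact h
  loopless := by
    constructor
    rintro (i | ⟨i, w⟩ | j) h <;> simp only [consAdj] at h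
    · omega
    · exact F.loopless.irrefl w h.2

lemma adj_ll {i j : Fin q} : (consG F v₀ q r).Adj (inl i) (inl j) ↔
    i.val + 1 = j.val ∨ j.val + 1 = i.val := Iff.rfl
lemma adj_lc {i j : Fin q} {w : W} :
    (consG F v₀ q r).Adj (inl i) (inr (inl (j, w))) ↔ i = j ∧ w = v₀ := Iff.rfl
lemma adj_cl {i j : Fin q} {w : W} :
    (consG F v₀ q r).Adj (inr (inl (j, w))) (inl i) ↔ i = j ∧ w = v₀ := Iff.rfl
lemma adj_lr {i : Fin q} {j : Fin r} :
    (consG F v₀ q r).Adj (inl i) (inr (inr j)) ↔ i.val = 0 := Iff.rfl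
lemma adj_rl {i : Fin q} {j : Fin r} :
    (consG F v₀ q r).Adj (inr (inr j)) (inl i) ↔ i.val = 0 := Iff.rfl
lemma adj_cc {i i' : Fin q} {w w' : W} :
    (consG F v₀ q r).Adj (inr (inl (i, w))) (inr (inl (i', w'))) ↔
      i = i' ∧ F.Adj w w' := Iff.rfl
lemma adj_cr {x : Fin q × W} {j : Fin r} :
    ¬ (consG F v₀ q r).Adj (inr (inl x)) (inr (inr j)) := by
  obtain ⟨i, w⟩ := x; exact fun h => h
lemma adj_rc {x : Fin q × W} {j : Fin r} :
    ¬ (consG F v₀ q r).Adj (inr (inr j)) (inr (inl x)) := by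
  obtain ⟨i, w⟩ := x; exact fun h => h
lemma adj_rr {j j' : Fin r} :
    ¬ (consG F v₀ q r).Adj (inr (inr j)) (inr (inr j')) := fun h => h

def ce1 (i : Fin (q-1)) : Sym2 (CV W q r) :=
  s(inl ⟨i.val, by have := i.2; omega⟩, inl ⟨i.val + 1, by have := i.2; omega⟩)

def ce2 (i : Fin q) : Sym2 (CV W q r) := s(inl i, inr (inl (i, v₀)))

def ce3 (p : Fin q × F.edgeSet) : Sym2 (CV W q r) :=
  p.2.val.map (fun w => inr (inl (p.1, w)))

def ce4 (hq : 0 < q) (j : Fin r) : Sym2 (CV W q r) := s(inl ⟨0, hq⟩, inr (inr j))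

lemma ce3_mem_form {x : Sym2 (CV W q r)} (hx : x ∈ Set.range (ce3 F q r)) :
    ∃ (i : Fin q) (a b : W), F.Adj a b ∧ x = s(inr (inl (i, a)), inr (inl (i, b))) := by
  obtain ⟨⟨i, e, he⟩, rfl⟩ := hx
  induction e using Sym2.ind with
  | _ a b => exact ⟨i, a, b, he, rfl⟩

lemma consG_edgeSet (hq : 0 < q) : (consG F v₀ q r).edgeSet =
    Set.range (ce1 (W := W) q r) ∪ Set.range (ce2 v₀ q r) ∪
      Set.range (ce3 F q r) ∪ Set.range (ce4 (W := W) q r hq) := by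
  ext e
  induction e using Sym2.ind with
  | _ x y =>
    simp only [SimpleGraph.mem_edgeSet, Set.mem_union, Set.mem_range]
    constructor
    · intro h
      match x, y with
      | inl i, inl j =>
        left; left; left
        rw [adj_ll] at h
        rcases h with h | h
        · refine ⟨⟨i.val, by have := j.2; omega⟩, ?_⟩
          unfold ce1
          rw [Sym2.eq_iff]
          left
          exact ⟨congrArg inl (Fin.ext rfl), congrArg inl (Fin.ext h)⟩
        · refine ⟨⟨j.val, by have := i.2; omega⟩, ?_⟩
          unfold ce1
          rw [Sym2.eq_iff]
          right
          exact ⟨congrArg inl (Fin.ext rfl), congrArg inl (Fin.ext h)⟩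
      | inl i, inr (inl (j, w)) =>
        left; left; right
        rw [adj_lc] at h
        obtain ⟨rfl, rfl⟩ := h
        exact ⟨i, rfl⟩
      | inr (inl (j, w)), inl i =>
        left; left; right
        rw [adj_cl] at h
        obtain ⟨rfl, rfl⟩ := h
        exact ⟨i, Sym2.eq_swap⟩
      | inl i, inr (inr jj) =>
        right
        rw [adj_lr] at h
        refine ⟨jj, ?_⟩
        unfold ce4
        rw [Sym2.eq_iff]
        left
        exact ⟨congrArg inl (Fin.ext h.symm), rfl⟩
      | inr (inr jj), inl i =>
        right
        rw [adj_rl] at h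
        refine ⟨jj, ?_⟩
        unfold ce4
        rw [Sym2.eq_iff]
        right
        exact ⟨congrArg inl (Fin.ext h.symm), rfl⟩
      | inr (inl (i, w)), inr (inl (i', w')) =>
        left; right
        rw [adj_cc] at h
        obtain ⟨rfl, hadj⟩ := h
        exact ⟨(i, ⟨s(w, w'), hadj⟩), rfl⟩
      | inr (inl p), inr (inr jj) => exact absurd h (adj_cr F v₀ q r)
      | inr (inr jj), inr (inl p) => exact absurd h (adj_rc F v₀ q r)
      | inr (inr jj), inr (inr jj') => exact absurd h (adj_rr F v₀ q r)
    · rintro (((⟨i, hi⟩ | ⟨i, hi⟩) | h3) | ⟨j, hj⟩)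
      · rw [← SimpleGraph.mem_edgeSet, ← hi]
        exact (SimpleGraph.mem_edgeSet _).mpr (Or.inl rfl)
      · rw [← SimpleGraph.mem_edgeSet, ← hi]
        exact (SimpleGraph.mem_edgeSet _).mpr ⟨rfl, rfl⟩
      · obtain ⟨i, a, b, hab, heq⟩ := ce3_mem_form F q r h3
        rw [← SimpleGraph.mem_edgeSet, heq]
        exact (SimpleGraph.mem_edgeSet _).mpr ⟨rfl, hab⟩
      · rw [← SimpleGraph.mem_edgeSet, ← hj]
        exact (SimpleGraph.mem_edgeSet _).mpr rfl

lemma ce1_inj : Function.Injective (ce1 (W := W) q r) := by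
  intro i j h
  unfold ce1 at h
  rw [Sym2.eq_iff] at h
  rcases h with ⟨h1, _⟩ | ⟨h1, h2⟩
  · simp only [Sum.inl.injEq, Fin.mk.injEq] at h1
    exact Fin.ext h1
  · simp only [Sum.inl.injEq, Fin.mk.injEq] at h1 h2
    apply Fin.ext; omega

lemma ce2_inj : Function.Injective (ce2 v₀ q r) := by
  intro i j h
  unfold ce2 at h
  rw [Sym2.eq_iff] at h
  rcases h with ⟨h1, _⟩ | ⟨h1, _⟩
  · simpa using h1
  · simp at h1

lemma ce3_inj : Function.Injective (ce3 F q r) := by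
  rintro ⟨i, e, he⟩ ⟨i', e', he'⟩ heq
  induction e using Sym2.ind with
  | _ a b =>
    induction e' using Sym2.ind with
    | _ c d =>
      simp only [ce3, Sym2.map_pair_eq, Sym2.eq_iff, Sum.inr.injEq, Sum.inl.injEq,
        Prod.mk.injEq] at heq
      rcases heq with ⟨⟨hi, ha⟩, ⟨_, hb⟩⟩ | ⟨⟨hi, ha⟩, ⟨_, hb⟩⟩
      · subst hi ha hb; rfl
      · subst hi ha hb
        simp only [Prod.mk.injEq, Subtype.mk.injEq, true_and]
        exact Sym2.eq_swap

lemma ce4_inj (hq : 0 < q) : Function.Injective (ce4 (W := W) q r hq) := by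
  intro i j h
  unfold ce4 at h
  rw [Sym2.eq_iff] at h
  rcases h with ⟨_, h2⟩ | ⟨h1, _⟩
  · simpa using h2
  · simp at h1

lemma disj12 : Disjoint (Set.range (ce1 (W := W) q r)) (Set.range (ce2 v₀ q r)) := by
  rw [Set.disjoint_left]
  rintro x ⟨i, rfl⟩ ⟨j, hj⟩
  simp [ce1, ce2, Sym2.eq_iff] at hj

lemma disj13 : Disjoint (Set.range (ce1 (W := W) q r)) (Set.range (ce3 F q r)) := by
  rw [Set.disjoint_left]
  rintro x ⟨i, rfl⟩ h3
  obtain ⟨j, a, b, _, heq⟩ := ce3_mem_form F q r h3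
  simp [ce1, Sym2.eq_iff] at heq

lemma disj14 (hq : 0 < q) :
    Disjoint (Set.range (ce1 (W := W) q r)) (Set.range (ce4 (W := W) q r hq)) := by
  rw [Set.disjoint_left]
  rintro x ⟨i, rfl⟩ ⟨j, hj⟩
  simp [ce1, ce4, Sym2.eq_iff] at hj

lemma disj23 : Disjoint (Set.range (ce2 v₀ q r)) (Set.range (ce3 F q r)) := by
  rw [Set.disjoint_left]
  rintro x ⟨i, rfl⟩ h3
  obtain ⟨j, a, b, _, heq⟩ := ce3_mem_form F q r h3
  simp [ce2, Sym2.eq_iff] at heq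

lemma disj24 (hq : 0 < q) :
    Disjoint (Set.range (ce2 v₀ q r)) (Set.range (ce4 (W := W) q r hq)) := by
  rw [Set.disjoint_left]
  rintro x ⟨i, rfl⟩ ⟨j, hj⟩
  simp [ce2, ce4, Sym2.eq_iff] at hj

lemma disj34 (hq : 0 < q) :
    Disjoint (Set.range (ce3 F q r)) (Set.range (ce4 (W := W) q r hq)) := by
  rw [Set.disjoint_left]
  rintro x h3 ⟨j, hj⟩
  obtain ⟨i, a, b, _, heq⟩ := ce3_mem_form F q r h3
  rw [heq] at hj
  simp [ce4, Sym2.eq_iff] at hj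

lemma consG_edge_ncard [Fintype W] (hq : 0 < q) :
    (consG F v₀ q r).edgeSet.ncard = (q - 1) + q + q * F.edgeSet.ncard + r := by
  have hfin : Finite (Sym2 (CV W q r)) := by unfold Sym2; infer_instance
  rw [consG_edgeSet F v₀ q r hq]
  rw [Set.ncard_union_eq (by
    rw [Set.disjoint_union_left]
    constructor
    · rw [Set.disjoint_union_left]
      exact ⟨disj14 q r hq, disj24 v₀ q r hq⟩
    · exact disj34 F q r hq) (Set.toFinite _) (Set.toFinite _)]
  rw [Set.ncard_union_eq (by
    rw [Set.disjoint_union_left]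
    exact ⟨disj13 F q r, disj23 F v₀ q r⟩) (Set.toFinite _) (Set.toFinite _)]
  rw [Set.ncard_union_eq (disj12 v₀ q r) (Set.toFinite _) (Set.toFinite _)]
  rw [ncard_range_inj (ce1_inj q r), ncard_range_inj (ce2_inj v₀ q r),
    ncard_range_inj (ce3_inj F q r), ncard_range_inj (ce4_inj q r hq)]
  rw [Nat.card_prod]
  simp [Nat.card_coe_set_eq]

lemma consG_reach_zero (hq : 0 < q) (hv₀ : ∀ u : W, u = v₀ ∨ F.Adj v₀ u) :
    ∀ x : CV W q r, (consG F v₀ q r).Reachable x (inl ⟨0, hq⟩) := by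
  have tree : ∀ t : ℕ, ∀ i : Fin q, i.val = t →
      (consG F v₀ q r).Reachable (inl i) (inl ⟨0, hq⟩) := by
    intro t
    induction t with
    | zero => intro i hi; rw [show i = ⟨0, hq⟩ from Fin.ext hi]
    | succ t ih =>
      intro i hi
      have hlt : t < q := by omega
      have hadj : (consG F v₀ q r).Adj (inl i) (inl ⟨t, hlt⟩) := Or.inr (by simp [hi])
      exact hadj.reachable.trans (ih ⟨t, hlt⟩ rfl)
  rintro (i | ⟨i, w⟩ | j)
  · exact tree i.val i rfl
  · have h1 : (consG F v₀ q r).Reachable (inr (inl (i, v₀))) (inl ⟨0, hq⟩) :=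
      (Adj.reachable (by exact ⟨rfl, rfl⟩ : (consG F v₀ q r).Adj (inr (inl (i, v₀))) (inl i))).trans
        (tree i.val i rfl)
    rcases hv₀ w with rfl | hadj
    · exact h1
    · exact (Adj.reachable (adj_cc F v₀ q r |>.mpr ⟨rfl, hadj.symm⟩)).trans h1
  · exact Adj.reachable ((adj_rl F v₀ q r).mpr rfl)

lemma consG_preconnected (hq : 0 < q) (hv₀ : ∀ u : W, u = v₀ ∨ F.Adj v₀ u) :
    (consG F v₀ q r).Preconnected := fun x y =>
  (consG_reach_zero F v₀ q r hq hv₀ x).trans (consG_reach_zero F v₀ q r hq hv₀ y).symm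


lemma delNbhd_adj {G : SimpleGraph V} {D : Set V} {a b : ((closedNbhd G D)ᶜ : Set V)} :
    (delNbhd G D).Adj a b ↔ G.Adj a.val b.val := Iff.rfl

lemma consG_survivor (hq : 0 < q) (x : CV W q r)
    (hx : x ∈ (closedNbhd (consG F v₀ q r) (Set.range (inl : Fin q → CV W q r)))ᶜ) :
    ∃ i w, w ≠ v₀ ∧ x = inr (inl (i, w)) := by
  match x with
  | inl i => exact absurd (Or.inl ⟨i, rfl⟩) hx
  | inr (inr j) =>
    exact absurd (Or.inr ⟨inl ⟨0, hq⟩, ⟨⟨0, hq⟩, rfl⟩, (adj_lr F v₀ q r).mpr rfl⟩) hx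
  | inr (inl (i, w)) =>
    by_cases hw : w = v₀
    · exact absurd (Or.inr ⟨inl i, ⟨i, rfl⟩, (adj_lc F v₀ q r).mpr ⟨rfl, hw⟩⟩) hx
    · exact ⟨i, w, hw, rfl⟩

lemma consG_isolating [Finite W] (hq : 0 < q) (hv₀ : ∀ u : W, u = v₀ ∨ F.Adj v₀ u) :
    IsIsolating (consG F v₀ q r) F (Set.range (inl : Fin q → CV W q r)) := by
  rintro ⟨f, hf⟩
  have hsu : ∀ u : W, ∃ i w', w' ≠ v₀ ∧ (f u).val = inr (inl (i, w')) := fun u =>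
    consG_survivor F v₀ q r hq (f u).val (f u).2
  choose gi gw hgw hgeq using hsu
  have hzone : ∀ u : W, gi u = gi v₀ := by
    intro u
    rcases hv₀ u with rfl | hadj
    · rfl
    · have hGadj : (consG F v₀ q r).Adj (f v₀).val (f u).val := f.map_adj hadj
      rw [hgeq v₀, hgeq u] at hGadj
      exact ((adj_cc F v₀ q r).mp hGadj).1.symm
  have hginj : Function.Injective gw := by
    intro a b hab
    apply hf
    apply Subtype.ext
    rw [hgeq a, hgeq b, hzone a, hzone b, hab]
  obtain ⟨u, hu⟩ := Finite.injective_iff_surjective.mp hginj v₀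
  exact hgw u hu

lemma consG_lower [Fintype W] (hq : 0 < q) (D : Set (CV W q r))
    (hD : IsIsolating (consG F v₀ q r) F D) : q ≤ D.ncard := by
  classical
  by_contra hlt
  push_neg at hlt
  set Hit : CV W q r → Fin q → Prop :=
    fun d i => ∃ w, d = inr (inl (i, w)) ∨ (consG F v₀ q r).Adj d (inr (inl (i, w))) with hHit
  have hit_unique : ∀ d i j, Hit d i → Hit d j → i = j := by
    rintro (a | ⟨a, wa⟩ | jj) i j ⟨w, hi⟩ ⟨w', hj⟩
    · have e1 : a = i := by
        rcases hi with h | h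
        · exact absurd h (by simp)
        · exact ((adj_lc F v₀ q r).mp h).1
      have e2 : a = j := by
        rcases hj with h | h
        · exact absurd h (by simp)
        · exact ((adj_lc F v₀ q r).mp h).1
      rw [← e1, e2]
    · have e1 : a = i := by
        rcases hi with h | h
        · simp only [Sum.inr.injEq, Sum.inl.injEq, Prod.mk.injEq] at h
          exact h.1
        · exact ((adj_cc F v₀ q r).mp h).1
      have e2 : a = j := by
        rcases hj with h | h
        · simp only [Sum.inr.injEq, Sum.inl.injEq, Prod.mk.injEq] at h
          exact h.1
        · exact ((adj_cc F v₀ q r).mp h).1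
      rw [← e1, e2]
    · rcases hi with h | h
      · exact absurd h (by simp)
      · exact absurd h (adj_rc F v₀ q r)
  set I : Set (Fin q) := {i | ∃ d ∈ D, Hit d i} with hI
  have : Nonempty (CV W q r) := ⟨inl ⟨0, hq⟩⟩
  set φ : Fin q → CV W q r :=
    fun i => if h : i ∈ I then h.choose else Classical.arbitrary _ with hφ
  have hφD : ∀ i ∈ I, φ i ∈ D := by
    intro i hi
    rw [hφ]
    simp only [dif_pos hi]
    exact hi.choose_spec.1
  have hφHit : ∀ i (hi : i ∈ I), Hit (φ i) i := by
    intro i hi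
    rw [hφ]
    simp only [dif_pos hi]
    exact hi.choose_spec.2
  have hinj : Set.InjOn φ I := by
    intro i hi j hj heq
    exact hit_unique (φ i) i j (hφHit i hi) (heq ▸ hφHit j hj)
  have hIcard : I.ncard ≤ D.ncard := Set.ncard_le_ncard_of_injOn φ hφD hinj (Set.toFinite _)
  have hex : ∃ i₀, i₀ ∉ I := by
    by_contra hcon
    push_neg at hcon
    have : I = Set.univ := Set.eq_univ_of_forall hcon
    rw [this, Set.ncard_univ, Nat.card_eq_fintype_card, Fintype.card_fin] at hIcard
    omega
  obtain ⟨i₀, hi₀⟩ := hex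
  apply hD
  have hmem : ∀ u : W, inr (inl (i₀, u)) ∈ (closedNbhd (consG F v₀ q r) D)ᶜ := by
    intro u hmem'
    rcases hmem' with hD' | ⟨d, hd, hadj⟩
    · exact hi₀ ⟨_, hD', u, Or.inl rfl⟩
    · exact hi₀ ⟨d, hd, u, Or.inr hadj⟩
  refine ⟨⟨fun u => ⟨inr (inl (i₀, u)), hmem u⟩, ?_⟩, ?_⟩
  · intro a b hab
    exact (adj_cc F v₀ q r).mpr ⟨rfl, hab⟩
  · intro a b hab
    have h2 : (inr (inl (i₀, a)) : CV W q r) = inr (inl (i₀, b)) := Subtype.ext_iff.mp hab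
    simpa using h2

lemma consG_iota [Fintype W] (hq : 0 < q) (hv₀ : ∀ u : W, u = v₀ ∨ F.Adj v₀ u) :
    iotaNum (consG F v₀ q r) F = q := by
  have hmemq : q ∈ {n | ∃ D : Set (CV W q r), IsIsolating (consG F v₀ q r) F D ∧ D.ncard = n} := by
    refine ⟨Set.range (inl : Fin q → CV W q r), consG_isolating F v₀ q r hq hv₀, ?_⟩
    rw [ncard_range_inj Sum.inl_injective, Nat.card_eq_fintype_card, Fintype.card_fin]
  apply le_antisymm
  · exact Nat.sInf_le hmemq
  · exact le_csInf ⟨q, hmemq⟩ (by rintro b ⟨D, hD, rfl⟩; exact consG_lower F v₀ q r hq D hD)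


/-- For every `m ≥ 0` and every `k`-edge graph `F` with `γ(F) = 1`, except when
`1 ≤ m = k ≤ 2`, there is a connected `m`-edge graph `G` with `(G,F)` not
special and `ι(G,F) = ⌊(m+1)/(k+2)⌋`: the bound of the main theorem is
attained. -/
theorem bound_attained {W : Type*} [Fintype W] (F : SimpleGraph W) (k m : ℕ)
    (hk : F.edgeSet.ncard = k) (hF : DominatedByVertex F)
    (hexc : ¬ (1 ≤ m ∧ m = k ∧ k ≤ 2)) :
    ∃ (V : Type) (_ : Fintype V) (G : SimpleGraph V),
      G.Preconnected ∧ G.edgeSet.ncard = m ∧ ¬ SpecialPair G F ∧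
      iotaNum G F = (m + 1) / (k + 2) := by
  classical
  obtain ⟨v₀w, hv₀w⟩ := hF
  by_cases hm : k + 1 ≤ m
  · -- main construction, transported to a Type-0 copy of W
    set n := Fintype.card W with hndef
    set e : Fin n ≃ W := (Fintype.equivFin W).symm with hedef
    set F' : SimpleGraph (Fin n) := SimpleGraph.comap (⇑e) F with hF'def
    have φ : F' ≃g F := ⟨e, Iff.rfl⟩
    have hk' : F'.edgeSet.ncard = k := by rw [iso_edge_ncard φ]; exact hk
    set v₀ : Fin n := e.symm v₀w with hv₀def
    have hv₀ : ∀ u : Fin n, u = v₀ ∨ F'.Adj v₀ u := by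
      intro u
      rcases hv₀w (e u) with h | h
      · left
        rw [hv₀def, ← h]
        simp
      · right
        show F.Adj (e v₀) (e u)
        rw [hv₀def]
        simpa using h
    set q := (m + 1) / (k + 2) with hqdef
    set r := (m + 1) % (k + 2) with hrdef
    have hq : 0 < q := (Nat.one_le_div_iff (by omega)).mpr (by omega)
    have hdm : (k + 2) * q + r = m + 1 := Nat.div_add_mod _ _
    have hedge : (consG F' v₀ q r).edgeSet.ncard = m := by
      rw [consG_edge_ncard F' v₀ q r hq, hk']
      have h2 : q * k + 2 * q + r = m + 1 := by rw [← hdm]; ring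
      set X := q * k with hX
      omega
    have hnsp : ¬ SpecialPair (consG F' v₀ q r) F' := by
      intro hs
      unfold SpecialPair at hs
      rcases hs with hee | ⟨hep, hec⟩
      · obtain ⟨ee⟩ := hee
        have hcard := Fintype.card_congr ee.toEquiv
        simp only [Fintype.card_sum, Fintype.card_prod, Fintype.card_fin] at hcard
        have hle : n ≤ q * n := Nat.le_mul_of_pos_left n hq
        set Y := q * n with hY
        omega
      · obtain ⟨ep⟩ := hep
        obtain ⟨ec⟩ := hec
        have hk2 : k = 2 := by rw [← hk', iso_edge_ncard ep, pathGraph3_edge_ncard]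
        have hn3 : n = 3 := by simpa using Fintype.card_congr ep.toEquiv
        have hm6 : m = 6 := by
          have h6 := iso_edge_ncard ec
          rw [cycleGraph6_edge_ncard, hedge] at h6
          exact h6
        have hq1 : q = 1 := by rw [hqdef, hm6, hk2]
        have hr3 : r = 3 := by rw [hrdef, hm6, hk2]
        have hcard := Fintype.card_congr ec.toEquiv
        simp only [Fintype.card_sum, Fintype.card_prod, Fintype.card_fin, hn3, hq1, hr3] at hcard
        omega
    refine ⟨CV (Fin n) q r, inferInstance, consG F' v₀ q r,
      consG_preconnected F' v₀ q r hq hv₀, hedge, ?_, ?_⟩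
    · intro hs
      exact hnsp (specialPair_of φ hs)
    · rw [iotaNum_congr φ]
      exact consG_iota F' v₀ q r hq hv₀
  · push_neg at hm
    by_cases hlt : m < k
    · -- star graph, m < k
      have hnc : ¬ HasCopy (starG m) F := by
        intro hc
        have := ncard_le_of_hasCopy hc
        rw [hk, starG_edge_ncard] at this
        omega
      refine ⟨Option (Fin m), inferInstance, starG m, starG_preconnected m,
        starG_edge_ncard m, ?_, ?_⟩
      · intro hs
        unfold SpecialPair at hs
        rcases hs with hee | ⟨hep, hec⟩
        · obtain ⟨ee⟩ := hee
          exact hnc (hasCopy_of_iso ee)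
        · obtain ⟨ep⟩ := hep
          obtain ⟨ec⟩ := hec
          have hn3 : Fintype.card W = 3 := by simpa using Fintype.card_congr ep.toEquiv
          have hch := edge_ncard_le_choose F
          rw [hk, hn3] at hch
          have hc6 : m + 1 = 6 := by simpa using Fintype.card_congr ec.toEquiv
          norm_num [Nat.choose] at hch
          omega
      · rw [iota_zero hnc]
        exact (Nat.div_eq_of_lt (by omega)).symm
    · -- m = k
      have hmk : m = k := by omega
      subst hmk
      rcases Nat.lt_or_ge m 3 with h3 | h3
      · -- m = k ≤ 2 : must be 0
        have hm0 : m = 0 := by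
          by_contra h0
          exact hexc ⟨by omega, rfl, by omega⟩
        subst hm0
        have hnc : ¬ HasCopy (⊥ : SimpleGraph Empty) F := by
          rintro ⟨f, -⟩
          exact (f v₀w).elim
        refine ⟨Empty, inferInstance, ⊥, fun x => x.elim, by simp, ?_, ?_⟩
        · intro hs
          unfold SpecialPair at hs
          rcases hs with hee | ⟨hep, hec⟩
          · obtain ⟨ee⟩ := hee
            exact (ee.toEquiv.symm v₀w).elim
          · obtain ⟨ec⟩ := hec
            exact (ec.toEquiv.symm 0).elim
        · rw [iota_zero hnc]
      · -- m = k ≥ 3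
        rcases Nat.lt_or_ge (Fintype.card W) 4 with hn4 | hn4
        · -- card W = 3, K3 case
          have hn1 : 1 ≤ Fintype.card W := Fintype.card_pos_iff.mpr ⟨v₀w⟩
          have hch := edge_ncard_le_choose F
          rw [hk] at hch
          have hmono := Nat.choose_le_choose 2 (show Fintype.card W ≤ 3 by omega)
          have hle3 : m ≤ 3 := by
            have := le_trans hch hmono
            norm_num [Nat.choose] at this
            omega
          have hm3 : m = 3 := by omega
          have hn3 : Fintype.card W = 3 := by
            by_contra hne
            have hle2 : Fintype.card W ≤ 2 := by omega
            have := le_trans hch (Nat.choose_le_choose 2 hle2)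
            norm_num [Nat.choose] at this
            omega
          subst hm3
          have hnc : ¬ HasCopy (starG 3) F := no_copy_star_K3 v₀w hv₀w hn3 hk
          refine ⟨Option (Fin 3), inferInstance, starG 3, starG_preconnected 3,
            starG_edge_ncard 3, ?_, ?_⟩
          · intro hs
            unfold SpecialPair at hs
            rcases hs with hee | ⟨hep, hec⟩
            · obtain ⟨ee⟩ := hee
              exact hnc (hasCopy_of_iso ee)
            · obtain ⟨ec⟩ := hec
              have := Fintype.card_congr ec.toEquiv
              simp at this
          · rw [iota_zero hnc]
        · -- card W ≥ 4, path case
          have hnc : ¬ HasCopy (pathGraph (m + 1)) F :=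
            no_copy_of_max_deg v₀w hv₀w hn4 (path_neighbor_bound m)
          refine ⟨Fin (m + 1), inferInstance, pathGraph (m + 1),
            pathGraph_preconnected (m + 1), pathGraph_edge_ncard m, ?_, ?_⟩
          · intro hs
            unfold SpecialPair at hs
            rcases hs with hee | ⟨hep, hec⟩
            · obtain ⟨ee⟩ := hee
              exact hnc (hasCopy_of_iso ee)
            · obtain ⟨ep⟩ := hep
              have hn3 : Fintype.card W = 3 := by simpa using Fintype.card_congr ep.toEquiv
              omega
          · rw [iota_zero hnc]
            exact (Nat.div_eq_of_lt (by omega)).symm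
end Cons
end
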